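/- Let G = (V, E) be a finite simple undirected graph with N = |V| ≥ 3, let B ⊆ E, let t = ⌊|B|/2⌋, and let W_{G,B} be the workflow authorization policy constructed from (G, B). Let Δ ⊆ U with |Δ| ≤ t, and let D(Δ) = { e ∈ B : (e,1) ∈ Δ }. Then there exists a valid plan of W_{G,B} assigning no user from Δ if and only if the graph G_{D(Δ)} = (V, E ∖ D(Δ)) has a Hamiltonian cycle. -/

import Mathlib

/-- A workflow authorization policy `W = (S, ≼, U, A, C)`:
steps `S`, an ordering relation `ord` (the partial order `≼`), users `U`,
a step authorization relation `A ⊆ S × U`, and a set `C` of constraints.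
A constraint is a pair `(T, Θ)` where `T ⊆ S` and `Θ` is a set of functions
from `T` to `U` (represented as `σ → Option υ` with domain exactly `T`). -/
structure WAP (σ υ : Type) where
  S : Finset σ
  ord : σ → σ → Prop
  U : Finset υ
  A : Set (σ × υ)
  C : Set (Finset σ × Set (σ → Option υ))

namespace WAP

variable {σ υ : Type} [DecidableEq σ] [DecidableEq υ]

/-- Well-formedness: `ord` is a partial order on `S`, `A ⊆ S × U`, and every
constraint `(T, Θ)` has `T ⊆ S` and `Θ` a set of functions from `T` to `U`. -/
def WellFormed (W : WAP σ υ) : Prop :=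
  (∀ s ∈ W.S, W.ord s s) ∧
  (∀ s₁ ∈ W.S, ∀ s₂ ∈ W.S, W.ord s₁ s₂ → W.ord s₂ s₁ → s₁ = s₂) ∧
  (∀ s₁ ∈ W.S, ∀ s₂ ∈ W.S, ∀ s₃ ∈ W.S, W.ord s₁ s₂ → W.ord s₂ s₃ → W.ord s₁ s₃) ∧
  (∀ p ∈ W.A, p.1 ∈ W.S ∧ p.2 ∈ W.U) ∧
  (∀ c ∈ W.C, c.1 ⊆ W.S ∧
    ∀ θ ∈ c.2, (∀ s, θ s ≠ none ↔ s ∈ c.1) ∧ ∀ s u, θ s = some u → u ∈ W.U)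

/-- A partial plan: a partial function from `S` to `U` whose domain is
causally closed (if `s₁` is assigned and `s₂ ≺ s₁` then `s₂` is assigned). -/
def IsPartialPlan (W : WAP σ υ) (θ : σ → Option υ) : Prop :=
  (∀ s u, θ s = some u → s ∈ W.S ∧ u ∈ W.U) ∧
  ∀ s₁ s₂, s₁ ∈ W.S → s₂ ∈ W.S → θ s₁ ≠ none → W.ord s₂ s₁ → s₂ ≠ s₁ → θ s₂ ≠ none

/-- Restriction of a partial plan to a set `T` of steps. -/
def restrictTo (θ : σ → Option υ) (T : Finset σ) : σ → Option υ :=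
  fun s => if s ∈ T then θ s else none

/-- Validity of a (partial) plan: every assignment is authorized, and every
constraint whose step set is contained in the domain is satisfied. -/
def Valid (W : WAP σ υ) (θ : σ → Option υ) : Prop :=
  (∀ s u, θ s = some u → (s, u) ∈ W.A) ∧
  ∀ c ∈ W.C, (∀ s ∈ c.1, θ s ≠ none) → restrictTo θ c.1 ∈ c.2

/-- A plan: a partial plan whose domain is all of `S`. -/
def IsPlan (W : WAP σ υ) (θ : σ → Option υ) : Prop :=
  W.IsPartialPlan θ ∧ ∀ s ∈ W.S, θ s ≠ none

def IsValidPlan (W : WAP σ υ) (θ : σ → Option υ) : Prop :=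
  W.IsPlan θ ∧ W.Valid θ

/-- `θ` assigns no user from `Δ`. -/
def Avoids (θ : σ → Option υ) (Δ : Finset υ) : Prop :=
  ∀ s u, θ s = some u → u ∉ Δ

/-- Static resiliency for budget `t`. -/
def StaticallyResilient (W : WAP σ υ) (t : ℕ) : Prop :=
  ∀ Δ : Finset υ, Δ ⊆ W.U → Δ.card ≤ t → ∃ θ, W.IsValidPlan θ ∧ Avoids θ Δ

/-- A move of Player 1: assign a user `u ∈ U ∖ Δ` to a not-yet-assigned step,
so that the result remains a causally closed partial plan and remains valid
(if the extension were invalid, Player 2 would win at once). -/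
def P1Move (W : WAP σ υ) (Δ : Finset υ) (θ θ' : σ → Option υ) : Prop :=
  ∃ s u, s ∈ W.S ∧ θ s = none ∧ u ∈ W.U ∧ u ∉ Δ ∧
    θ' = Function.update θ s (some u) ∧
    W.IsPartialPlan θ' ∧ W.Valid θ'

/-- A move of Player 2 in the one-shot resiliency game: either pass, or
(if it has not yet struck) strike, adding at most `t` users of `U` to `Δ`. -/
def OneShotP2Move (W : WAP σ υ) (t : ℕ) (Δ : Finset υ) (struck : Bool)
    (Δ' : Finset υ) (struck' : Bool) : Prop :=
  (Δ' = Δ ∧ struck' = struck) ∨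
  (struck = false ∧ struck' = true ∧ Δ ⊆ Δ' ∧ Δ' ⊆ W.U ∧ (Δ' \ Δ).card ≤ t)

/-- Player 1 can force a win of the one-shot resiliency game within `n`
more rounds, from the given configuration (`struck` records whether
Player 2 has already struck).  Player 1 has won once the (valid) partial
plan has been extended to a valid plan on all of `S`; otherwise, for every
move of Player 2 there must be a move of Player 1 from which Player 1 can
still force a win.  Since each round assigns one more step, the game from
the initial configuration lasts at most `|S|` rounds. -/
def OneShotWins (W : WAP σ υ) (t : ℕ) :
    ℕ → Finset υ → (σ → Option υ) → Bool → Prop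
  | 0, _, θ, _ => (∀ s ∈ W.S, θ s ≠ none) ∧ W.IsPartialPlan θ ∧ W.Valid θ
  | n + 1, Δ, θ, struck =>
      ((∀ s ∈ W.S, θ s ≠ none) ∧ W.IsPartialPlan θ ∧ W.Valid θ) ∨
      ((∃ s ∈ W.S, θ s = none) ∧
        ∀ Δ' struck', OneShotP2Move W t Δ struck Δ' struck' →
          ∃ θ', P1Move W Δ' θ θ' ∧ OneShotWins W t n Δ' θ' struck')

/-- One-shot resiliency for budget `t`: Player 1 wins the one-shot
resiliency game (from the initial configuration `(∅, ∅)`) no matter how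
Player 2 plays. -/
def OneShotResilient (W : WAP σ υ) (t : ℕ) : Prop :=
  OneShotWins W t W.S.card ∅ (fun _ => none) false

/-- A move of Player 2 in the decremental resiliency game: add zero or more
users of `U` to `Δ`, subject to `|Δ| ≤ t` throughout. -/
def DecP2Move (W : WAP σ υ) (t : ℕ) (Δ Δ' : Finset υ) : Prop :=
  Δ ⊆ Δ' ∧ Δ' ⊆ W.U ∧ Δ'.card ≤ t

/-- Player 1 can force a win of the decremental resiliency game within `n`
more rounds. -/
def DecWins (W : WAP σ υ) (t : ℕ) : ℕ → Finset υ → (σ → Option υ) → Prop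
  | 0, _, θ => (∀ s ∈ W.S, θ s ≠ none) ∧ W.IsPartialPlan θ ∧ W.Valid θ
  | n + 1, Δ, θ =>
      ((∀ s ∈ W.S, θ s ≠ none) ∧ W.IsPartialPlan θ ∧ W.Valid θ) ∨
      ((∃ s ∈ W.S, θ s = none) ∧
        ∀ Δ', DecP2Move W t Δ Δ' →
          ∃ θ', P1Move W Δ' θ θ' ∧ DecWins W t n Δ' θ')

/-- Decremental resiliency for budget `t`: Player 1 wins the decremental
resiliency game no matter how Player 2 plays. -/
def DecrementallyResilient (W : WAP σ υ) (t : ℕ) : Prop :=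
  DecWins W t W.S.card ∅ (fun _ => none)

end WAP
section GraphConstruction

open WAP

variable {V : Type} [Fintype V] [DecidableEq V]

/-- A user of `W_{G,B}`: either a vertex user `(v, j)` or an edge user `(e, l)`. -/
abbrev UserGB (V : Type) := Sum (V × ℕ) (Sym2 V × ℕ)

/-- The successor index modulo `N` (so `sv_{i+1}` after `sv_i`, wrapping around). -/
def nextFin {N : ℕ} (i : Fin N) : Fin N :=
  ⟨(i.1 + 1) % N, Nat.mod_lt _ (Nat.lt_of_le_of_lt (Nat.zero_le _) i.isLt)⟩

/-- The type-1 entailment constraint `ent(ρ, s, s')`: the constraint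
`({s, s'}, Θ)` where `Θ` is the set of functions `θ : {s, s'} → U` with
`(θ(s), θ(s')) ∈ ρ`. -/
def entCon {σ υ : Type} [DecidableEq σ] (U : Finset υ) (ρ : υ → υ → Prop)
    (s s' : σ) : Finset σ × Set (σ → Option υ) :=
  ({s, s'},
   {θ | (∀ x, θ x ≠ none ↔ x ∈ ({s, s'} : Finset σ)) ∧
        (∀ x v, θ x = some v → v ∈ U) ∧
        ∃ a b, θ s = some a ∧ θ s' = some b ∧ ρ a b})

/-- The vertex users: `(v, j)` for `v ∈ V` and `1 ≤ j ≤ t+1`. -/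
def UVfin (V : Type) [Fintype V] [DecidableEq V] (t : ℕ) : Finset (UserGB V) :=
  (Finset.univ ×ˢ Finset.Icc 1 (t + 1)).image Sum.inl

/-- The edge users: `(e, l)` for `e ∈ E`, with `1 ≤ l ≤ t+1` if `e ∉ B` and
`l = 1` if `e ∈ B`. -/
def UEfin (G : SimpleGraph V) [DecidableRel G.Adj] (B : Finset (Sym2 V))
    (t : ℕ) : Finset (UserGB V) :=
  (G.edgeFinset.biUnion
    (fun e => ({e} : Finset (Sym2 V)) ×ˢ
      (if e ∈ B then ({1} : Finset ℕ) else Finset.Icc 1 (t + 1)))).image Sum.inr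

/-- `incident`: relates an edge user `(e, l)` to a vertex user `(v, j)` where
`v` is one of the two endpoints of `e`. -/
def incidentRel (G : SimpleGraph V) : UserGB V → UserGB V → Prop :=
  fun a b => ∃ e l v j, a = Sum.inr (e, l) ∧ b = Sum.inl (v, j) ∧
    e ∈ G.edgeSet ∧ v ∈ e

/-- `distinct`: relates vertex users representing distinct vertices. -/
def distinctRel (V : Type) : UserGB V → UserGB V → Prop :=
  fun a b => ∃ v i w j, a = Sum.inl (v, i) ∧ b = Sum.inl (w, j) ∧ v ≠ w

/-- The workflow authorization policy `W_{G,B}` built from a finite simple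
graph `G = (V, E)` and an edge set `B ⊆ E`, with budget `t = ⌊|B|/2⌋`.
Steps: `Sum.inl i` is `sv_{i+1}` and `Sum.inr i` is `se_{i+1}` (0-indexed),
the order `≼` is equality.  Constraints:  `C₁ ∪ C₂ ∪ C₃ ∪ C_ham` where
`C₁ = {ent(incident⁻¹, sv_i, se_i)}`, `C₂ ∪ C₃ = {ent(incident, se_i, sv_{i+1 mod N})}`,
and `C_ham = {ent(distinct, sv_i, sv_j) : i < j}`. -/
def WGB (G : SimpleGraph V) [DecidableRel G.Adj] (B : Finset (Sym2 V)) :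
    WAP (Sum (Fin (Fintype.card V)) (Fin (Fintype.card V))) (UserGB V) :=
  { S := Finset.univ
    ord := Eq
    U := UVfin V (B.card / 2) ∪ UEfin G B (B.card / 2)
    A := {p | match p.1 with
              | Sum.inl _ => p.2 ∈ UVfin V (B.card / 2)
              | Sum.inr _ => p.2 ∈ UEfin G B (B.card / 2)}
    C := {c | ∃ i : Fin (Fintype.card V),
            c = entCon (UVfin V (B.card / 2) ∪ UEfin G B (B.card / 2))
                  (fun a b => incidentRel G b a) (Sum.inl i) (Sum.inr i)} ∪
         {c | ∃ i : Fin (Fintype.card V),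
            c = entCon (UVfin V (B.card / 2) ∪ UEfin G B (B.card / 2))
                  (incidentRel G) (Sum.inr i) (Sum.inl (nextFin i))} ∪
         {c | ∃ i j : Fin (Fintype.card V), i < j ∧
            c = entCon (UVfin V (B.card / 2) ∪ UEfin G B (B.card / 2))
                  (distinctRel V) (Sum.inl i) (Sum.inl j)} }

/-- `v₁, e₁, v₂, e₂, …, v_N, e_N` is a Hamiltonian cycle of `G`: the `v_i`
are pairwise distinct and cover all of `V`, and each `e_i` is an edge of `G`
joining `v_i` and `v_{i+1}` (indices modulo `N`). -/
def IsHamCycle (G : SimpleGraph V) (v : Fin (Fintype.card V) → V)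
    (e : Fin (Fintype.card V) → Sym2 V) : Prop :=
  Function.Injective v ∧ (∀ x : V, ∃ i, v i = x) ∧
  ∀ i, e i ∈ G.edgeSet ∧ e i = s(v i, v (nextFin i))

end GraphConstruction

/-! The constraints force every plan of `W_{G,B}` to give each `sv_i` a vertex user `(v_i, _)` and
each `se_i` an edge user `(e_i, _)`. Then `C₁`, `C₂` and `C₃` say that `e_i` is an edge joining
`v_i` and `v_{i+1}`, and `C_ham` that the `v_i` are pairwise distinct, so valid plans are exactly
Hamiltonian cycles decorated with copy indices. Avoiding `Δ` restricts only the choice of copies: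
every vertex and every edge outside `B` has `t + 1 > |Δ|` copies, so one of them escapes `Δ`,
while an edge `e ∈ B` has the single copy `(e, 1)`, which escapes `Δ` iff `e ∉ D(Δ)`. -/

open WAP Finset

lemma nextFin_ne_self {N : ℕ} (hN : 2 ≤ N) (i : Fin N) : nextFin i ≠ i := by
  intro h
  have hv : (i.1 + 1) % N = i.1 := congrArg Fin.val h
  rcases Nat.lt_or_ge (i.1 + 1) N with h' | h'
  · rw [Nat.mod_eq_of_lt h'] at hv; omega
  · rw [show i.1 + 1 = N by omega, Nat.mod_self] at hv; omega

lemma exists_mem_Icc_notMem_of_card_le {α : Type*} {Δ : Finset α} {t : ℕ} (hΔ : #Δ ≤ t)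
    {f : ℕ → α} (hf : Function.Injective f) : ∃ k ∈ Icc 1 (t + 1), f k ∉ Δ := by
  obtain ⟨_, hfk, hfkΔ⟩ := exists_mem_notMem_of_card_lt_card
    (s := Δ) (t := (Icc 1 (t + 1)).map ⟨f, hf⟩) (by rw [card_map, Nat.card_Icc]; omega)
  obtain ⟨k, hk, rfl⟩ := mem_map.1 hfk
  exact ⟨k, hk, hfkΔ⟩

lemma restrictTo_mem_entCon_iff {σ υ : Type} [DecidableEq σ] {U : Finset υ}
    {ρ : υ → υ → Prop} {s s' : σ} {θ : σ → Option υ} (hdom : ∀ x, θ x ≠ none)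
    (hU : ∀ x u, θ x = some u → u ∈ U) :
    restrictTo θ (entCon U ρ s s').1 ∈ (entCon U ρ s s').2 ↔
      ∃ a b, θ s = some a ∧ θ s' = some b ∧ ρ a b := by
  simp only [entCon, restrictTo, Set.mem_ofPred_eq, mem_insert, mem_singleton, true_or,
    or_true, if_true]
  refine ⟨fun h => h.2.2, fun h => ⟨fun x => ?_, fun x u => ?_, h⟩⟩
  · split_ifs with hx <;> simp [hx, hdom x]
  · split_ifs
    · exact hU x u
    · simp

section Users

variable {V : Type}

@[simp]
lemma incidentRel_inr_inl (G : SimpleGraph V) {e : Sym2 V} {l : ℕ} {v : V} {j : ℕ} :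
    incidentRel G (Sum.inr (e, l)) (Sum.inl (v, j)) ↔ e ∈ G.edgeSet ∧ v ∈ e := by
  simp [incidentRel]

@[simp]
lemma distinctRel_inl_inl {v w : V} {i j : ℕ} :
    distinctRel V (Sum.inl (v, i)) (Sum.inl (w, j)) ↔ v ≠ w := by
  simp [distinctRel]

variable [Fintype V] [DecidableEq V] {t : ℕ}

@[simp]
lemma inl_mem_UVfin {v : V} {j : ℕ} :
    (Sum.inl (v, j) : UserGB V) ∈ UVfin V t ↔ j ∈ Icc 1 (t + 1) := by
  simp [UVfin]

@[simp]
lemma inr_notMem_UVfin {e : Sym2 V} {l : ℕ} : (Sum.inr (e, l) : UserGB V) ∉ UVfin V t := by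
  simp [UVfin]

variable (G : SimpleGraph V) [DecidableRel G.Adj] (B : Finset (Sym2 V))

@[simp]
lemma inr_mem_UEfin {e : Sym2 V} {l : ℕ} :
    (Sum.inr (e, l) : UserGB V) ∈ UEfin G B t ↔
      e ∈ G.edgeSet ∧ l ∈ (if e ∈ B then {1} else Icc 1 (t + 1)) := by
  simp [UEfin]

@[simp]
lemma inl_notMem_UEfin {v : V} {j : ℕ} : (Sum.inl (v, j) : UserGB V) ∉ UEfin G B t := by
  simp [UEfin]

lemma exists_vertexUser_notMem {Δ : Finset (UserGB V)} (hΔ : #Δ ≤ t) (v : V) :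
    ∃ j, (Sum.inl (v, j) : UserGB V) ∈ UVfin V t ∧ Sum.inl (v, j) ∉ Δ := by
  simpa using exists_mem_Icc_notMem_of_card_le hΔ (f := fun j => Sum.inl (v, j))
    (fun _ _ h => by simpa using h)

lemma exists_edgeUser_notMem_iff {Δ : Finset (UserGB V)} (hΔ : #Δ ≤ t) {e : Sym2 V} :
    (∃ l, (Sum.inr (e, l) : UserGB V) ∈ UEfin G B t ∧ Sum.inr (e, l) ∉ Δ) ↔
      e ∈ G.edgeSet ∧ ¬(e ∈ B ∧ Sum.inr (e, 1) ∈ Δ) := by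
  by_cases heB : e ∈ B
  · simp [heB]
  · obtain ⟨l, hl, hlΔ⟩ := exists_mem_Icc_notMem_of_card_le hΔ
      (f := fun l => Sum.inr (e, l)) (fun _ _ h => by simpa using h)
    simp only [inr_mem_UEfin, heB, if_false, false_and, not_false_eq_true, and_true]
    exact ⟨fun ⟨_, ⟨hE, _⟩, _⟩ => hE, fun hE => ⟨l, ⟨hE, hl⟩, hlΔ⟩⟩

end Users

section Plans

variable {V : Type}

def planOf {N : ℕ} (v : Fin N → V) (j : Fin N → ℕ) (e : Fin N → Sym2 V) (l : Fin N → ℕ) :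
    Fin N ⊕ Fin N → Option (UserGB V) :=
  Sum.elim (fun i => some (.inl (v i, j i))) (fun i => some (.inr (e i, l i)))

section

variable {N : ℕ} {v : Fin N → V} {j : Fin N → ℕ} {e : Fin N → Sym2 V} {l : Fin N → ℕ}

lemma planOf_ne_none (s : Fin N ⊕ Fin N) : planOf v j e l s ≠ none := by
  cases s <;> simp [planOf]

lemma avoids_planOf_iff {Δ : Finset (UserGB V)} :
    Avoids (planOf v j e l) Δ ↔ ∀ i, Sum.inl (v i, j i) ∉ Δ ∧ Sum.inr (e i, l i) ∉ Δ :=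
  ⟨fun h i => ⟨h (.inl i) _ rfl, h (.inr i) _ rfl⟩,
    by rintro h (i | i) u ⟨⟩; exacts [(h i).1, (h i).2]⟩

end

variable [Fintype V] [DecidableEq V] (G : SimpleGraph V) [DecidableRel G.Adj]
  (B : Finset (Sym2 V))

lemma exists_eq_planOf {θ : Fin (Fintype.card V) ⊕ Fin (Fintype.card V) → Option (UserGB V)}
    (hθ : (WGB G B).IsValidPlan θ) : ∃ v j e l, θ = planOf v j e l := by
  obtain ⟨⟨_, hdom⟩, hA, _⟩ := hθ
  have hsv : ∀ i, ∃ v j, θ (.inl i) = some (.inl (v, j)) := by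
    intro i
    obtain ⟨u, hu⟩ := Option.ne_none_iff_exists'.1 (hdom _ (mem_univ _))
    rcases u with ⟨v, j⟩ | ⟨e, l⟩
    · exact ⟨v, j, hu⟩
    · exact (inr_notMem_UVfin (hA (.inl i) _ hu)).elim
  have hse : ∀ i, ∃ e l, θ (.inr i) = some (.inr (e, l)) := by
    intro i
    obtain ⟨u, hu⟩ := Option.ne_none_iff_exists'.1 (hdom _ (mem_univ _))
    rcases u with ⟨v, j⟩ | ⟨e, l⟩
    · exact (inl_notMem_UEfin G B (hA (.inr i) _ hu)).elim
    · exact ⟨e, l, hu⟩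
  choose v j hv using hsv
  choose e l he using hse
  exact ⟨v, j, e, l, funext (Sum.rec hv he)⟩

variable {v : Fin (Fintype.card V) → V} {j : Fin (Fintype.card V) → ℕ}
  {e : Fin (Fintype.card V) → Sym2 V} {l : Fin (Fintype.card V) → ℕ}

lemma planOf_authorized_iff :
    (∀ s u, planOf v j e l s = some u → (s, u) ∈ (WGB G B).A) ↔
      (∀ i, (Sum.inl (v i, j i) : UserGB V) ∈ UVfin V (#B / 2)) ∧
        ∀ i, (Sum.inr (e i, l i) : UserGB V) ∈ UEfin G B (#B / 2) :=
  ⟨fun h => ⟨fun i => h (.inl i) _ rfl, fun i => h (.inr i) _ rfl⟩,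
    by rintro ⟨hV, hE⟩ (i | i) u ⟨⟩; exacts [hV i, hE i]⟩

variable {G B} in
lemma planOf_mem_users (hV : ∀ i, (Sum.inl (v i, j i) : UserGB V) ∈ UVfin V (#B / 2))
    (hE : ∀ i, (Sum.inr (e i, l i) : UserGB V) ∈ UEfin G B (#B / 2)) :
    ∀ s u, planOf v j e l s = some u → u ∈ UVfin V (#B / 2) ∪ UEfin G B (#B / 2) := by
  rintro (i | i) u ⟨⟩
  exacts [mem_union_left _ (hV i), mem_union_right _ (hE i)]

lemma planOf_satisfies_iff (hV : ∀ i, (Sum.inl (v i, j i) : UserGB V) ∈ UVfin V (#B / 2))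
    (hE : ∀ i, (Sum.inr (e i, l i) : UserGB V) ∈ UEfin G B (#B / 2)) :
    (∀ c ∈ (WGB G B).C, (∀ s ∈ c.1, planOf v j e l s ≠ none) →
        restrictTo (planOf v j e l) c.1 ∈ c.2) ↔
      Function.Injective v ∧ ∀ i, e i ∈ G.edgeSet ∧ v i ∈ e i ∧ v (nextFin i) ∈ e i := by
  have hsat := fun s s' ρ => restrictTo_mem_entCon_iff (s := s) (s' := s') (ρ := ρ)
    planOf_ne_none (planOf_mem_users hV hE)
  constructor
  · intro hC
    have hc : ∀ c ∈ (WGB G B).C, restrictTo (planOf v j e l) c.1 ∈ c.2 :=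
      fun c hc => hC c hc fun s _ => planOf_ne_none s
    refine ⟨Function.Injective.of_lt_imp_ne fun i i' hii => ?_, fun i => ?_⟩
    · have hCham := hc _ (Or.inr ⟨i, i', hii, rfl⟩)
      rw [hsat] at hCham
      obtain ⟨_, _, ⟨⟩, ⟨⟩, hdist⟩ := hCham
      exact distinctRel_inl_inl.1 hdist
    · have hC₁ := hc _ (Or.inl (Or.inl ⟨i, rfl⟩))
      have hC₂ := hc _ (Or.inl (Or.inr ⟨i, rfl⟩))
      rw [hsat] at hC₁ hC₂
      obtain ⟨_, _, ⟨⟩, ⟨⟩, hinc₁⟩ := hC₁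
      obtain ⟨_, _, ⟨⟩, ⟨⟩, hinc₂⟩ := hC₂
      exact ⟨((incidentRel_inr_inl G).1 hinc₁).1, ((incidentRel_inr_inl G).1 hinc₁).2,
        ((incidentRel_inr_inl G).1 hinc₂).2⟩
  · rintro ⟨hinj, hve⟩ c ((⟨i, rfl⟩ | ⟨i, rfl⟩) | ⟨i, i', hii, rfl⟩) - <;> rw [hsat]
    · exact ⟨_, _, rfl, rfl, (incidentRel_inr_inl G).2 ⟨(hve i).1, (hve i).2.1⟩⟩
    · exact ⟨_, _, rfl, rfl, (incidentRel_inr_inl G).2 ⟨(hve i).1, (hve i).2.2⟩⟩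
    · exact ⟨_, _, rfl, rfl, distinctRel_inl_inl.2 (hinj.ne hii.ne)⟩

lemma isValidPlan_planOf_iff :
    (WGB G B).IsValidPlan (planOf v j e l) ↔
      ((∀ i, (Sum.inl (v i, j i) : UserGB V) ∈ UVfin V (#B / 2)) ∧
        ∀ i, (Sum.inr (e i, l i) : UserGB V) ∈ UEfin G B (#B / 2)) ∧
      Function.Injective v ∧ ∀ i, e i ∈ G.edgeSet ∧ v i ∈ e i ∧ v (nextFin i) ∈ e i := by
  constructor
  · rintro ⟨_, hA, hC⟩
    obtain ⟨hV, hE⟩ := (planOf_authorized_iff G B).1 hA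
    exact ⟨⟨hV, hE⟩, (planOf_satisfies_iff G B hV hE).1 hC⟩
  · rintro ⟨⟨hV, hE⟩, hC⟩
    refine ⟨⟨⟨fun s u hs => ⟨mem_univ s, planOf_mem_users hV hE s u hs⟩, ?_⟩,
      fun s _ => planOf_ne_none s⟩,
      (planOf_authorized_iff G B).2 ⟨hV, hE⟩, (planOf_satisfies_iff G B hV hE).2 hC⟩
    -- the order of `W_{G,B}` is equality, so causal closure is vacuous
    exact fun _ _ _ _ _ h hne => absurd h hne

theorem exists_validPlan_avoids_iff (Δ : Finset (UserGB V)) :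
    (∃ θ, (WGB G B).IsValidPlan θ ∧ Avoids θ Δ) ↔
      ∃ (v : Fin (Fintype.card V) → V) (e : Fin (Fintype.card V) → Sym2 V),
        Function.Injective v ∧ ∀ i,
          (∃ l, (Sum.inr (e i, l) : UserGB V) ∈ UEfin G B (#B / 2) ∧ Sum.inr (e i, l) ∉ Δ) ∧
          v i ∈ e i ∧ v (nextFin i) ∈ e i ∧
          ∃ j, (Sum.inl (v i, j) : UserGB V) ∈ UVfin V (#B / 2) ∧ Sum.inl (v i, j) ∉ Δ := by
  constructor
  · rintro ⟨θ, hθ, hΔ⟩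
    obtain ⟨v, j, e, l, rfl⟩ := exists_eq_planOf G B hθ
    obtain ⟨⟨hV, hE⟩, hinj, hve⟩ := (isValidPlan_planOf_iff G B).1 hθ
    have hΔ' := avoids_planOf_iff.1 hΔ
    exact ⟨v, e, hinj, fun i =>
      ⟨⟨l i, hE i, (hΔ' i).2⟩, (hve i).2.1, (hve i).2.2, ⟨j i, hV i, (hΔ' i).1⟩⟩⟩
  · rintro ⟨v, e, hinj, h⟩
    choose l hl using fun i => (h i).1
    choose j hj using fun i => (h i).2.2.2
    refine ⟨planOf v j e l, (isValidPlan_planOf_iff G B).2 ⟨⟨fun i => (hj i).1, fun i => (hl i).1⟩,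
      hinj, fun i => ⟨((inr_mem_UEfin G B).1 (hl i).1).1, (h i).2.1, (h i).2.2.1⟩⟩,
      avoids_planOf_iff.2 fun i => ⟨(hj i).2, (hl i).2⟩⟩

end Plans

lemma isHamCycle_iff {V : Type} [Fintype V] [DecidableEq V] {H : SimpleGraph V}
    {v : Fin (Fintype.card V) → V} {e : Fin (Fintype.card V) → Sym2 V}
    (hN : 2 ≤ Fintype.card V) :
    IsHamCycle H v e ↔
      Function.Injective v ∧ ∀ i, e i ∈ H.edgeSet ∧ v i ∈ e i ∧ v (nextFin i) ∈ e i := by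
  refine ⟨fun ⟨hinj, _, he⟩ => ⟨hinj, fun i => ?_⟩, fun ⟨hinj, he⟩ => ⟨hinj, ?_, fun i => ?_⟩⟩
  · obtain ⟨hE, hei⟩ := he i
    exact ⟨hE, hei ▸ Sym2.mem_mk_left _ _, hei ▸ Sym2.mem_mk_right _ _⟩
  · exact ((Fintype.bijective_iff_injective_and_card v).2 ⟨hinj, Fintype.card_fin _⟩).2
  · have hne : v i ≠ v (nextFin i) := hinj.ne (nextFin_ne_self hN i).symm
    exact ⟨(he i).1, (Sym2.mem_and_mem_iff hne).1 (he i).2⟩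

theorem WGB_validPlan_avoiding_iff_hamCycle_deleteEdges_general
    {V : Type} [Fintype V] [DecidableEq V]
    (G : SimpleGraph V) [DecidableRel G.Adj]
    (hN : 3 ≤ Fintype.card V)
    (B : Finset (Sym2 V))
    (Δ : Finset (UserGB V))
    (hΔcard : Δ.card ≤ B.card / 2) :
    (∃ θ, (WGB G B).IsValidPlan θ ∧ WAP.Avoids θ Δ) ↔
      ∃ (v : Fin (Fintype.card V) → V) (e : Fin (Fintype.card V) → Sym2 V),
        IsHamCycle (G.deleteEdges {e' : Sym2 V | e' ∈ B ∧ Sum.inr (e', 1) ∈ Δ})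
          v e := by
  rw [exists_validPlan_avoids_iff]
  simp only [exists_edgeUser_notMem_iff G B hΔcard, exists_vertexUser_notMem hΔcard, and_true,
    isHamCycle_iff (by omega : 2 ≤ Fintype.card V), SimpleGraph.edgeSet_deleteEdges, Set.mem_sdiff,
    Set.mem_ofPred_eq]

/-- For `Δ ⊆ U` with `|Δ| ≤ t` and
`D(Δ) = {e ∈ B : (e,1) ∈ Δ}`, there is a valid plan of `W_{G,B}` assigning no
user from `Δ` iff the graph `G_{D(Δ)} = (V, E ∖ D(Δ))` has a Hamiltonian
cycle. -/
theorem WGB_validPlan_avoiding_iff_hamCycle_deleteEdges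
    {V : Type} [Fintype V] [DecidableEq V]
    (G : SimpleGraph V) [DecidableRel G.Adj]
    (hN : 3 ≤ Fintype.card V)
    (B : Finset (Sym2 V)) (hB : ↑B ⊆ G.edgeSet)
    (Δ : Finset (UserGB V)) (hΔU : Δ ⊆ (WGB G B).U)
    (hΔcard : Δ.card ≤ B.card / 2) :
    (∃ θ, (WGB G B).IsValidPlan θ ∧ WAP.Avoids θ Δ) ↔
      ∃ (v : Fin (Fintype.card V) → V) (e : Fin (Fintype.card V) → Sym2 V),
        IsHamCycle (G.deleteEdges {e' : Sym2 V | e' ∈ B ∧ Sum.inr (e', 1) ∈ Δ})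
          v e :=
  WGB_validPlan_avoiding_iff_hamCycle_deleteEdges_general G hN B Δ hΔcard
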